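/- Let γ(u) ∈ 1 + u⁻²ℂ[[u⁻²]] and let μ(u) = γ(u)⁻¹(1+½u⁻¹)⁻¹(1−a₁u⁻¹)⋯(1−a_{2k+1}u⁻¹), where a_{2k+1} is the ♯′-special element of (a₁,…,a_{2k+1}) and a_{2i−1}+a_{2i} ∈ ℤ_{≥0} for i = 1,…,k. Define μ♯(u) = γ(u)⁻¹(1+½u⁻¹)⁻¹(1−a₁u⁻¹)⋯(1−a_{2k}u⁻¹)(1+(1+a_{2k+1})u⁻¹). Then ((2u−1)/(2u+1))·μ♯(−u) ⇒ μ♯(u) if and only if −1 − a_{2k+1} ∈ ℤ_{≥0}. -/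

import Mathlib

open PowerSeries Polynomial

noncomputable section

abbrev PS := PowerSeries ℂ

/-- `f ∈ 1 + u⁻¹ℂ[[u⁻¹]]`, with `X` playing the role of `u⁻¹`. -/
def One1 (f : PS) : Prop := PowerSeries.constantCoeff f = 1

/-- `f ∈ 1 + u⁻²ℂ[[u⁻²]]`: an even power series with constant term 1. -/
def EvenOne (f : PS) : Prop := One1 f ∧ ∀ n, Odd n → PowerSeries.coeff n f = 0

/-- `u^{-deg P}·P(u)` viewed as a power series in `X = u⁻¹`. -/
def lowerP (P : Polynomial ℂ) : PS := (P.reverse : PowerSeries ℂ)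

/-- `f → g`: there is a monic `P` with `f/g = P(u+1)/P(u)`. -/
def Arrow (f g : PS) : Prop :=
  ∃ P : Polynomial ℂ, P.Monic ∧ f * lowerP P = g * lowerP (P.comp (Polynomial.X + 1))

/-- `f ⇒ g`: there is a monic `P` of even degree with `P(u) = P(1−u)` and
`f/g = P(u+1)/P(u)`. -/
def DArrow (f g : PS) : Prop :=
  ∃ P : Polynomial ℂ, P.Monic ∧ Even P.natDegree ∧ P.comp (1 - Polynomial.X) = P ∧
    f * lowerP P = g * lowerP (P.comp (Polynomial.X + 1))

/-- `f(−u)`, i.e. `u⁻¹ ↦ −u⁻¹`. -/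
def negU (f : PS) : PS := PowerSeries.rescale (-1) f

/-- the factor `1 + a·u⁻¹`. -/
def linF (a : ℂ) : PS := 1 + PowerSeries.C a * PowerSeries.X

/-- `f` is a polynomial in `u⁻¹`. -/
def IsPolyPS (f : PS) : Prop := ∃ Q : Polynomial ℂ, (Q : PS) = f

/-- `z ∈ ℤ_{≥0}` (so `a ≥ b` iff `IsNonnegInt (a - b)`). -/
def IsNonnegInt (z : ℂ) : Prop := ∃ n : ℕ, z = n
/-- The ♯′-condition on the list `a 0, …, a (2k)` (0-indexed): for each `i < k`,
whenever `{a p + a q : 2i ≤ p < q ≤ 2k} ∩ ℤ_{≥0}` is non-empty, `a (2i) + a (2i+1)`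
is its minimal element for the order `x ≥ y ↔ x - y ∈ ℤ_{≥0}`. -/
def SharpCond (k : ℕ) (a : ℕ → ℂ) : Prop :=
  ∀ i < k,
    (∃ p q, 2*i ≤ p ∧ p < q ∧ q ≤ 2*k ∧ IsNonnegInt (a p + a q)) →
      IsNonnegInt (a (2*i) + a (2*i+1)) ∧
      ∀ p q, 2*i ≤ p → p < q → q ≤ 2*k → IsNonnegInt (a p + a q) →
        IsNonnegInt (a p + a q - (a (2*i) + a (2*i+1)))

/-- `b` is a re-indexing (permutation) of the first `m` entries of `a`. -/
def PermOf (m : ℕ) (b a : ℕ → ℂ) : Prop :=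
  ∃ σ : Equiv.Perm (Fin m), ∀ i : Fin m, b i = a (σ i)

/-- `x` is a ♯′-special element of the list `a 0, …, a (2k)`. -/
def IsSharpSpecial' (k : ℕ) (a : ℕ → ℂ) (x : ℂ) : Prop :=
  ∃ b : ℕ → ℂ, PermOf (2*k+1) b a ∧ SharpCond k b ∧ b (2*k) = x

/-!
Multiplying by `γ(u)(1 + ½u⁻¹)` and by `u^{deg}`, the relation `⇒` becomes the polynomial
identity `∏_{r ∈ s} (u + r) · P(u) = ∏_{r ∈ s} (u - r) · P(u + 1)` for the multiset
`s = {a₁, …, a_{2k}, b}`, `b = -1 - a_{2k+1}`.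

If `b ∈ ℤ_{≥0}`, a witness is a product of shifted rising factorials:
`(u - α)^{(m)} (u - β)^{(m)}` for each pair `α + β = m`, and `(u - b)^{(2b)}` for `b`; each factor
satisfies the identity and `P(u) = P(1 - u)`.

Conversely, on roots the identity reads `-s + roots P = s + (roots P - 1)`. Counting the
elements `z` with `z + b ∈ ℤ_{≥0}` telescopes away `P`, and the ♯′-minimality makes every pair
count the same on both sides, which leaves `2b ∈ ℤ_{≥0}`. Summing the roots gives
`deg P = 2 ∑ s = 2 ∑ (a_{2i-1} + a_{2i}) + 2b`, so the parity of `deg P` forces `b ∈ ℤ_{≥0}`.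
-/

open scoped Classical

lemma not_isNonnegInt_neg_natCast_sub_one (n : ℕ) : ¬ IsNonnegInt (-n - 1) := by
  rintro ⟨m, hm⟩
  have : ((m + n + 1 : ℕ) : ℂ) = 0 := by push_cast; linear_combination -hm
  exact absurd (Nat.cast_eq_zero.mp this) (by omega)

lemma isNonnegInt_sub_iff_of_ne {z x : ℂ} (h : z ≠ x) :
    IsNonnegInt (z - x) ↔ IsNonnegInt (z - (x + 1)) := by
  constructor
  · rintro ⟨_ | n, hn⟩
    · exact absurd (sub_eq_zero.mp (by simpa using hn)) h
    · exact ⟨n, by push_cast at hn; linear_combination hn⟩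
  · rintro ⟨n, hn⟩
    exact ⟨n + 1, by push_cast; linear_combination hn⟩

lemma isNonnegInt_sum {ι : Type*} (I : Finset ι) (f : ι → ℂ)
    (h : ∀ i ∈ I, IsNonnegInt (f i)) : IsNonnegInt (∑ i ∈ I, f i) := by
  choose n hn using h
  exact ⟨∑ i ∈ I.attach, n i i.2, by
    rw [Nat.cast_sum, ← Finset.sum_attach]; exact Finset.sum_congr rfl fun i _ => hn i i.2⟩

lemma isNonnegInt_of_two_mul_eq {b : ℂ} {M : ℕ} (hM : Even M) (h : 2 * b = M) :
    IsNonnegInt b := by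
  obtain ⟨r, rfl⟩ := hM
  exact ⟨r, by push_cast at h; linear_combination h / 2⟩

lemma Multiset.countP_singleton {α : Type*} (p : α → Prop) [DecidablePred p] (x : α) :
    ({x} : Multiset α).countP p = if p x then 1 else 0 := by
  rw [← Multiset.cons_zero, Multiset.countP_cons, Multiset.countP_zero, zero_add]

lemma Multiset.map_range_two_mul {α : Type*} (k : ℕ) (a : ℕ → α) :
    (Multiset.range (2 * k)).map a = ∑ i ∈ Finset.range k, {a (2 * i), a (2 * i + 1)} := by
  induction k with
  | zero => simp
  | succ k ih =>
    rw [Finset.sum_range_succ, ← ih, show 2 * (k + 1) = 2 * k + 1 + 1 by ring,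
      Multiset.range_succ, Multiset.range_succ]
    simp only [Multiset.insert_eq_cons, ← Multiset.singleton_add, Multiset.map_add,
      Multiset.map_singleton]
    abel

lemma countP_isNonnegInt_sub (Q : Multiset ℂ) (x : ℂ) :
    Q.countP (fun z => IsNonnegInt (z - x)) =
      Q.countP (fun z => IsNonnegInt (z - (x + 1))) + Q.count x := by
  induction Q using Multiset.induction with
  | empty => simp
  | cons z Q ih =>
    rw [Multiset.countP_cons, Multiset.countP_cons, Multiset.count_cons, ih]
    rcases eq_or_ne z x with rfl | hzx
    · have h0 : IsNonnegInt (z - z) := ⟨0, by simp⟩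
      have h1 : ¬ IsNonnegInt (z - (z + 1)) := by
        simpa [sub_add_eq_sub_sub] using not_isNonnegInt_neg_natCast_sub_one 0
      simp only [h0, h1, if_true, if_false]
      omega
    · simp only [isNonnegInt_sub_iff_of_ne hzx, hzx.symm, ↓reduceIte, add_zero]
      omega

lemma countP_add_count_of_add_eq {L R Q : Multiset ℂ} (h : L + Q = R + Q.map (· - 1)) (x : ℂ) :
    L.countP (fun z => IsNonnegInt (z - x)) + Q.count x =
      R.countP (fun z => IsNonnegInt (z - x)) := by
  have hcount := congrArg (Multiset.countP fun z => IsNonnegInt (z - x)) h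
  simp only [Multiset.countP_add, Multiset.countP_map, countP_isNonnegInt_sub Q x] at hcount
  have hshift : (Q.filter fun z => IsNonnegInt (z - 1 - x)).card =
      Q.countP (fun z => IsNonnegInt (z - (x + 1))) := by
    rw [Multiset.countP_eq_card_filter]
    simp only [sub_sub, add_comm (1 : ℂ)]
  simp only [hshift] at hcount
  omega

lemma card_eq_two_mul_sum_of_add_eq {R : Type*} [CommRing R] {s Q : Multiset R}
    (h : s.map Neg.neg + Q = s + Q.map (· - 1)) : (Q.card : R) = 2 * s.sum := by
  have hsum := congrArg Multiset.sum h
  have hneg : (s.map Neg.neg).sum = -s.sum := Multiset.sum_map_neg' s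
  simp only [Multiset.sum_add, Multiset.sum_map_sub, Multiset.map_id', Multiset.map_const',
    Multiset.sum_replicate, nsmul_eq_mul, mul_one, hneg] at hsum
  linear_combination hsum

lemma Polynomial.reverse_one {R : Type*} [Semiring R] : (1 : R[X]).reverse = 1 := by
  simpa using reverse_C (1 : R)

lemma Polynomial.reverse_injective_of_natDegree_eq {R : Type*} [Semiring R] {P Q : R[X]}
    (hd : P.natDegree = Q.natDegree) (h : P.reverse = Q.reverse) : P = Q := by
  ext i
  have := congrArg (coeff · (revAt P.natDegree i)) h
  simpa [coeff_reverse, hd, revAt_invol] using this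

section Roots

variable {R : Type*} [CommRing R] [IsDomain R]

lemma Polynomial.roots_multiset_prod_X_add_C (s : Multiset R) :
    (s.map fun r => Polynomial.X + Polynomial.C r).prod.roots = s.map Neg.neg := by
  have h : (s.map fun r => Polynomial.X + Polynomial.C r) =
      (s.map Neg.neg).map fun r => Polynomial.X - Polynomial.C r := by
    simp [Multiset.map_map]
  rw [h, roots_multiset_prod_X_sub_C]

lemma Polynomial.roots_comp_X_add_one (P : R[X]) :
    (P.comp (Polynomial.X + 1)).roots = P.roots.map (· - 1) := by
  simpa using roots_comp_C_mul_X_add_C P 1 1 isUnit_one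

end Roots

section ShiftedPochhammer

variable {R : Type*} [CommRing R]

lemma ascPochhammer_comp_X_sub_C_shift {α β : R} {m : ℕ} (h : α + β = m) :
    (Polynomial.X + Polynomial.C β) * (ascPochhammer R m).comp (Polynomial.X - Polynomial.C α) =
      (Polynomial.X - Polynomial.C α) *
        ((ascPochhammer R m).comp (Polynomial.X - Polynomial.C α)).comp (Polynomial.X + 1) := by
  have hright :=
    congrArg (·.comp (Polynomial.X - Polynomial.C α)) (ascPochhammer_succ_right R m)
  have hleft := congrArg (·.comp (Polynomial.X - Polynomial.C α)) (ascPochhammer_succ_left R m)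
  simp only [mul_comp, add_comp, X_comp, natCast_comp, comp_assoc, one_comp] at hright hleft
  have hβ : Polynomial.X - Polynomial.C α + (m : R[X]) = Polynomial.X + Polynomial.C β := by
    rw [← map_natCast Polynomial.C, ← h, map_add]; ring
  rw [hβ] at hright
  rw [mul_comm, ← hright, hleft, comp_assoc, sub_comp, X_comp, C_comp, add_sub_right_comm]

variable [IsDomain R]

lemma monic_ascPochhammer_comp (α : R) (m : ℕ) :
    ((ascPochhammer R m).comp (Polynomial.X - Polynomial.C α)).Monic :=
  (monic_ascPochhammer R m).comp_X_sub_C α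

lemma natDegree_ascPochhammer_comp (α : R) (m : ℕ) :
    ((ascPochhammer R m).comp (Polynomial.X - Polynomial.C α)).natDegree = m := by
  rw [natDegree_comp, ascPochhammer_natDegree, natDegree_X_sub_C, mul_one]

variable [Infinite R]

lemma ascPochhammer_comp_X_sub_C_comp_one_sub {α β : R} {m : ℕ} (h : α + β = m) :
    ((ascPochhammer R m).comp (Polynomial.X - Polynomial.C α)).comp (1 - Polynomial.X) =
      (-1) ^ m * (ascPochhammer R m).comp (Polynomial.X - Polynomial.C β) := by
  refine Polynomial.funext fun x => ?_
  have hx : 1 - x - α = -(x - β + m - 1) := by rw [← h]; ring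
  simp only [eval_comp, eval_mul, eval_pow, eval_neg, eval_one, eval_sub, eval_X, eval_C, hx,
    ascPochhammer_eval_neg_eq_descPochhammer, descPochhammer_eval_eq_ascPochhammer]
  ring_nf

end ShiftedPochhammer

/-- The polynomial form of `∏_{r ∈ s} (1 + r u⁻¹) ⇒ ∏_{r ∈ s} (1 - r u⁻¹)`. -/
structure IsDArrowWitness {R : Type*} [CommRing R] (s : Multiset R) (P : R[X]) : Prop where
  monic : P.Monic
  even_natDegree : Even P.natDegree
  comp_one_sub : P.comp (1 - Polynomial.X) = P
  shift : (s.map fun r => Polynomial.X + Polynomial.C r).prod * P =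
    (s.map fun r => Polynomial.X - Polynomial.C r).prod * P.comp (Polynomial.X + 1)

namespace IsDArrowWitness

variable {R : Type*} [CommRing R]

lemma zero [Nontrivial R] : IsDArrowWitness (0 : Multiset R) 1 :=
  ⟨monic_one, by simp, one_comp, by simp⟩

lemma add {s t : Multiset R} {P Q : R[X]} (hP : IsDArrowWitness s P)
    (hQ : IsDArrowWitness t Q) : IsDArrowWitness (s + t) (P * Q) where
  monic := hP.monic.mul hQ.monic
  even_natDegree := by
    rw [hP.monic.natDegree_mul hQ.monic]; exact hP.even_natDegree.add hQ.even_natDegree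
  comp_one_sub := by rw [mul_comp, hP.comp_one_sub, hQ.comp_one_sub]
  shift := by
    simp only [Multiset.map_add, Multiset.prod_add, mul_comp]
    linear_combination (t.map fun r => Polynomial.X + Polynomial.C r).prod * Q * hP.shift +
      (s.map fun r => Polynomial.X - Polynomial.C r).prod * P.comp (Polynomial.X + 1) * hQ.shift

lemma exists_sum [Nontrivial R] {ι : Type*} (I : Finset ι) (s : ι → Multiset R)
    (h : ∀ i ∈ I, ∃ P, IsDArrowWitness (s i) P) : ∃ P, IsDArrowWitness (∑ i ∈ I, s i) P :=
  Finset.sum_induction s (fun t => ∃ P, IsDArrowWitness t P)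
    (fun _ _ ⟨P, hP⟩ ⟨Q, hQ⟩ => ⟨P * Q, hP.add hQ⟩) ⟨1, zero⟩ h

variable [IsDomain R]

lemma map_neg_add_roots {s : Multiset R} {P : R[X]} (hP : IsDArrowWitness s P) :
    s.map Neg.neg + P.roots = s + P.roots.map (· - 1) := by
  have hN := (monic_multiset_prod_of_monic s _ fun r _ => monic_X_add_C r).mul hP.monic
  have hD := (monic_multiset_prod_of_monic s _ fun r _ => monic_X_sub_C r).mul
    (hP.monic.comp_X_add_C 1)
  have h := congrArg Polynomial.roots hP.shift
  rw [C_1] at hD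
  rw [roots_mul hN.ne_zero, roots_mul hD.ne_zero, roots_multiset_prod_X_add_C,
    roots_multiset_prod_X_sub_C, roots_comp_X_add_one] at h
  exact h

lemma natDegree_eq_two_mul_sum {K : Type*} [Field K] [IsAlgClosed K] {s : Multiset K}
    {P : K[X]} (hP : IsDArrowWitness s P) : (P.natDegree : K) = 2 * s.sum := by
  rw [(IsAlgClosed.splits P).natDegree_eq_card_roots]
  exact card_eq_two_mul_sum_of_add_eq hP.map_neg_add_roots

variable [Infinite R]

lemma pair {α β : R} {m : ℕ} (h : α + β = m) :
    IsDArrowWitness {α, β} ((ascPochhammer R m).comp (Polynomial.X - Polynomial.C α) *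
      (ascPochhammer R m).comp (Polynomial.X - Polynomial.C β)) where
  monic := (monic_ascPochhammer_comp α m).mul (monic_ascPochhammer_comp β m)
  even_natDegree := by
    rw [(monic_ascPochhammer_comp α m).natDegree_mul (monic_ascPochhammer_comp β m),
      natDegree_ascPochhammer_comp, natDegree_ascPochhammer_comp]
    exact ⟨m, rfl⟩
  comp_one_sub := by
    rw [mul_comp, ascPochhammer_comp_X_sub_C_comp_one_sub h,
      ascPochhammer_comp_X_sub_C_comp_one_sub ((add_comm β α).trans h)]
    rw [mul_mul_mul_comm, ← mul_pow, neg_one_mul, neg_neg, one_pow, one_mul, mul_comm]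
  shift := by
    have hα := ascPochhammer_comp_X_sub_C_shift h
    have hβ := ascPochhammer_comp_X_sub_C_shift ((add_comm β α).trans h)
    simp only [Multiset.insert_eq_cons, Multiset.map_cons, Multiset.map_singleton,
      Multiset.prod_cons, Multiset.prod_singleton, mul_comp]
    linear_combination (Polynomial.X + Polynomial.C α) *
        (ascPochhammer R m).comp (Polynomial.X - Polynomial.C β) * hα +
      (Polynomial.X - Polynomial.C α) *
        ((ascPochhammer R m).comp (Polynomial.X - Polynomial.C α)).comp (Polynomial.X + 1) * hβ

lemma natCast (n : ℕ) :
    IsDArrowWitness {(n : R)}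
      ((ascPochhammer R (2 * n)).comp (Polynomial.X - Polynomial.C (n : R))) where
  monic := monic_ascPochhammer_comp _ _
  even_natDegree := by rw [natDegree_ascPochhammer_comp]; exact even_two_mul n
  comp_one_sub := by
    rw [ascPochhammer_comp_X_sub_C_comp_one_sub (by push_cast; ring), pow_mul]; simp
  shift := by
    simpa using ascPochhammer_comp_X_sub_C_shift (α := (n : R)) (β := n) (m := 2 * n)
      (by push_cast; ring)

end IsDArrowWitness

lemma lowerP_one : lowerP 1 = 1 := by simp [lowerP, Polynomial.reverse_one]

lemma lowerP_mul (P Q : ℂ[X]) : lowerP (P * Q) = lowerP P * lowerP Q := by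
  rw [lowerP, reverse_mul_of_domain, Polynomial.coe_mul]; rfl

lemma lowerP_X_add_C (r : ℂ) : lowerP (Polynomial.X + Polynomial.C r) = linF r := by
  have hX : (Polynomial.X : ℂ[X]).reverse = 1 := by
    rw [← mul_one Polynomial.X, reverse_X_mul, Polynomial.reverse_one]
  simp [lowerP, linF, hX]

lemma lowerP_multiset_prod_X_add_C (s : Multiset ℂ) :
    lowerP (s.map fun r => Polynomial.X + Polynomial.C r).prod = (s.map linF).prod := by
  induction s using Multiset.induction with
  | empty => simpa using lowerP_one
  | cons r s ih => simp [lowerP_mul, lowerP_X_add_C, ih]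

lemma lowerP_multiset_prod_X_sub_C (s : Multiset ℂ) :
    lowerP (s.map fun r => Polynomial.X - Polynomial.C r).prod =
      (s.map fun r => linF (-r)).prod := by
  simpa [Multiset.map_map, Function.comp_def, sub_eq_add_neg] using
    lowerP_multiset_prod_X_add_C (s.map Neg.neg)

lemma negU_linF (r : ℂ) : negU (linF r) = linF (-r) := by
  ext (_ | _ | n) <;> simp [negU, linF, coeff_rescale, PowerSeries.coeff_one]

lemma negU_eq_self_of_evenOne {γ : PS} (hγ : EvenOne γ) : negU γ = γ := by
  ext n
  rw [negU, coeff_rescale]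
  rcases Nat.even_or_odd n with hn | hn
  · rw [hn.neg_one_pow, one_mul]
  · rw [hγ.2 n hn, mul_zero]

lemma linF_mul_inv (r : ℂ) : linF r * (linF r)⁻¹ = 1 :=
  PowerSeries.mul_inv_cancel _ (by simp [linF])

lemma negU_mul (f g : PS) : negU (f * g) = negU f * negU g := map_mul (rescale (-1)) f g

lemma negU_multiset_prod (s : Multiset PS) : negU s.prod = (s.map negU).prod :=
  map_multiset_prod (rescale (-1)) s

lemma lowerP_mul_eq_iff {N D P Q : ℂ[X]} (hN : N.Monic) (hD : D.Monic) (hP : P.Monic)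
    (hQ : Q.Monic) (hND : N.natDegree = D.natDegree) (hPQ : P.natDegree = Q.natDegree) :
    lowerP N * lowerP P = lowerP D * lowerP Q ↔ N * P = D * Q := by
  rw [← lowerP_mul, ← lowerP_mul]
  refine ⟨fun h => Polynomial.reverse_injective_of_natDegree_eq ?_ (Polynomial.coe_inj.1 h),
    fun h => by rw [h]⟩
  rw [hN.natDegree_mul hP, hD.natDegree_mul hQ, hND, hPQ]

lemma darrow_iff_exists_isDArrowWitness {γ μ : PS} {s : Multiset ℂ} (hγ : EvenOne γ)
    (h : γ * linF (1/2) * μ = (s.map fun r => linF (-r)).prod) :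
    DArrow (linF (-(1/2)) * (linF (1/2))⁻¹ * negU μ) μ ↔ ∃ P, IsDArrowWitness s P := by
  set N := (s.map fun r => Polynomial.X + Polynomial.C r).prod
  set D := (s.map fun r => Polynomial.X - Polynomial.C r).prod
  have hN : N.Monic := monic_multiset_prod_of_monic s _ fun r _ => monic_X_add_C r
  have hD : D.Monic := monic_multiset_prod_of_monic s _ fun r _ => monic_X_sub_C r
  have hND : N.natDegree = D.natDegree := by
    rw [natDegree_multiset_prod_of_monic _ (by simp [monic_X_add_C]),
      natDegree_multiset_prod_of_monic _ (by simp [monic_X_sub_C])]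
    simp [Multiset.map_map]
  have hU : γ * linF (1/2) ≠ 0 := fun h0 => by
    have hγ0 : PowerSeries.constantCoeff γ = 1 := hγ.1
    simpa [hγ0, linF] using congrArg PowerSeries.constantCoeff h0
  have hUN : γ * linF (1/2) * (linF (-(1/2)) * (linF (1/2))⁻¹ * negU μ) = lowerP N := by
    calc _ = γ * linF (-(1/2)) * negU μ * (linF (1/2) * (linF (1/2))⁻¹) := by ring
      _ = negU (γ * linF (1/2) * μ) := by
        rw [linF_mul_inv, mul_one, negU_mul, negU_mul, negU_eq_self_of_evenOne hγ, negU_linF]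
      _ = lowerP N := by
        rw [h, lowerP_multiset_prod_X_add_C, negU_multiset_prod, Multiset.map_map]
        simp [negU_linF]
  have hUD : γ * linF (1/2) * μ = lowerP D := by rw [h, lowerP_multiset_prod_X_sub_C]
  refine exists_congr fun P => ?_
  have hiff : ∀ (hP : P.Monic), linF (-(1/2)) * (linF (1/2))⁻¹ * negU μ * lowerP P =
      μ * lowerP (P.comp (Polynomial.X + 1)) ↔
      N * P = D * P.comp (Polynomial.X + 1) := fun hP => by
    rw [← lowerP_mul_eq_iff hN hD hP (by simpa using hP.comp_X_add_C 1) hND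
      (by rw [natDegree_comp, ← C_1, natDegree_X_add_C, mul_one]), ← hUN, ← hUD]
    simp only [mul_assoc (γ * linF (1/2))]
    exact (mul_right_injective₀ hU).eq_iff.symm
  constructor
  · rintro ⟨hP, hev, hsymm, hshift⟩
    exact ⟨hP, hev, hsymm, (hiff hP).1 hshift⟩
  · rintro ⟨hP, hev, hsymm, hshift⟩
    exact ⟨hP, hev, hsymm, (hiff hP).2 hshift⟩

namespace SharpCond

variable {k : ℕ} {a : ℕ → ℂ}

lemma isNonnegInt_neg_sub_iff (hcond : SharpCond k a) {i p q : ℕ} (hi : i < k)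
    (hq : 2 * i ≤ q) (hqk : q < 2 * k) (hpq : a p + a q = a (2 * i) + a (2 * i + 1))
    (hpair : IsNonnegInt (a (2 * i) + a (2 * i + 1))) :
    IsNonnegInt (-a q - (1 + a (2 * k))) ↔ IsNonnegInt (a p - (1 + a (2 * k))) := by
  obtain ⟨m, hm⟩ := hpair
  constructor
  · rintro ⟨n, hn⟩
    exact ⟨n + m, by push_cast; linear_combination hn + hpq + hm⟩
  · rintro ⟨n, hn⟩
    by_cases hmn : m ≤ n
    · exact ⟨n - m, by rw [Nat.cast_sub hmn]; linear_combination hn - hpq - hm⟩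
    · -- otherwise `a q + a (2k) ∈ ℤ_{≥0}` would lie below the minimum `a (2i) + a (2i+1)`
      have hsum : a q + a (2 * k) = ((m - n - 1 : ℕ) : ℂ) := by
        rw [Nat.cast_sub (by omega), Nat.cast_sub (by omega)]
        linear_combination hpq + hm - hn
      have hmin := (hcond i hi ⟨q, 2 * k, hq, hqk, le_rfl, _, hsum⟩).2 q (2 * k) hq hqk le_rfl
        ⟨_, hsum⟩
      rw [hsum, hm, Nat.cast_sub (by omega), Nat.cast_sub (by omega), Nat.cast_one,
        show (m - n - 1 - m : ℂ) = -n - 1 by ring] at hmin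
      exact absurd hmin (not_isNonnegInt_neg_natCast_sub_one n)

lemma countP_map_neg_pair (hcond : SharpCond k a) {i : ℕ} (hi : i < k)
    (hpair : IsNonnegInt (a (2 * i) + a (2 * i + 1))) :
    (({a (2 * i), a (2 * i + 1)} : Multiset ℂ).map Neg.neg).countP
        (fun z => IsNonnegInt (z - (1 + a (2 * k)))) =
      ({a (2 * i), a (2 * i + 1)} : Multiset ℂ).countP
        (fun z => IsNonnegInt (z - (1 + a (2 * k)))) := by
  have h₁ := hcond.isNonnegInt_neg_sub_iff (p := 2 * i + 1) hi le_rfl (by omega) (add_comm _ _)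
    hpair
  have h₂ := hcond.isNonnegInt_neg_sub_iff (p := 2 * i) hi (by omega) (by omega) rfl hpair
  simp only [Multiset.insert_eq_cons, Multiset.map_cons, Multiset.map_singleton,
    Multiset.countP_cons, Multiset.countP_singleton, h₁, h₂]
  omega

lemma countP_map_neg_pairs (hcond : SharpCond k a)
    (hpa : ∀ i < k, IsNonnegInt (a (2 * i) + a (2 * i + 1))) :
    ((∑ i ∈ Finset.range k, ({a (2 * i), a (2 * i + 1)} : Multiset ℂ)).map Neg.neg).countP
        (fun z => IsNonnegInt (z - (1 + a (2 * k)))) =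
      (∑ i ∈ Finset.range k, ({a (2 * i), a (2 * i + 1)} : Multiset ℂ)).countP
        (fun z => IsNonnegInt (z - (1 + a (2 * k)))) := by
  rw [← Multiset.coe_mapAddMonoidHom, map_sum, ← Multiset.coe_countPAddMonoidHom, map_sum,
    map_sum]
  exact Finset.sum_congr rfl fun i hi =>
    hcond.countP_map_neg_pair (Finset.mem_range.1 hi) (hpa i (Finset.mem_range.1 hi))

end SharpCond

lemma IsDArrowWitness.isNonnegInt_of_sharpCond {k : ℕ} {a : ℕ → ℂ} (hcond : SharpCond k a)
    (hpa : ∀ i < k, IsNonnegInt (a (2 * i) + a (2 * i + 1))) {P : ℂ[X]}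
    (hP : IsDArrowWitness
      (∑ i ∈ Finset.range k, ({a (2 * i), a (2 * i + 1)} : Multiset ℂ) + {-1 - a (2 * k)}) P) :
    IsNonnegInt (-1 - a (2 * k)) := by
  have htail := countP_add_count_of_add_eq hP.map_neg_add_roots (1 + a (2 * k))
  simp only [Multiset.map_add, Multiset.countP_add, hcond.countP_map_neg_pairs hpa,
    Multiset.map_singleton, Multiset.countP_singleton] at htail
  have h2b : IsNonnegInt (2 * (-1 - a (2 * k))) := by
    by_contra h
    rw [if_pos ⟨0, by push_cast; ring⟩, if_neg (by convert h using 2; ring)] at htail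
    omega
  obtain ⟨M, hM⟩ := h2b
  obtain ⟨t, ht⟩ := isNonnegInt_sum (Finset.range k) (fun i => a (2 * i) + a (2 * i + 1))
    fun i hi => hpa i (Finset.mem_range.1 hi)
  have hdeg := hP.natDegree_eq_two_mul_sum
  rw [Multiset.sum_add, ← Multiset.coe_sumAddMonoidHom, map_sum] at hdeg
  simp only [Multiset.coe_sumAddMonoidHom, Multiset.insert_eq_cons, Multiset.sum_cons,
    Multiset.sum_singleton, ht] at hdeg
  have hdegM : P.natDegree = 2 * t + M :=
    Nat.cast_injective (R := ℂ) (by push_cast; linear_combination hdeg + hM)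
  have hMeven := (Nat.even_add.1 (hdegM ▸ hP.even_natDegree)).1 (even_two_mul t)
  exact isNonnegInt_of_two_mul_eq hMeven hM

theorem darrow_twist_sharp_iff_special_le_neg_one_general (k : ℕ) (a : ℕ → ℂ) (γ μs : PS)
    (hγ : EvenOne γ)
    (hcond : SharpCond k a)
    (hpa : ∀ i < k, IsNonnegInt (a (2*i) + a (2*i+1)))
    (hdef : γ * linF (1/2) * μs =
      (∏ i ∈ Finset.range (2*k), linF (-(a i))) * linF (1 + a (2*k))) :
    DArrow (linF (-(1/2)) * (linF (1/2))⁻¹ * negU μs) μs ↔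
      IsNonnegInt (-1 - a (2*k)) := by
  have hroots : γ * linF (1/2) * μs =
      (((Multiset.range (2 * k)).map a + {-1 - a (2 * k)}).map fun r => linF (-r)).prod := by
    rw [hdef, Multiset.map_add, Multiset.map_map, Multiset.prod_add,
      Finset.prod_eq_multiset_prod, Finset.range_val, Multiset.map_singleton,
      Multiset.prod_singleton, neg_sub, sub_neg_eq_add, add_comm (a (2 * k))]
    rfl
  rw [Multiset.map_range_two_mul] at hroots
  rw [darrow_iff_exists_isDArrowWitness hγ hroots]
  refine ⟨fun ⟨P, hP⟩ => hP.isNonnegInt_of_sharpCond hcond hpa, fun ⟨n, hn⟩ => ?_⟩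
  obtain ⟨P, hP⟩ := IsDArrowWitness.exists_sum (Finset.range k) _ fun i hi => by
    obtain ⟨m, hm⟩ := hpa i (Finset.mem_range.1 hi)
    exact ⟨_, IsDArrowWitness.pair hm⟩
  rw [hn]
  exact ⟨_, hP.add (IsDArrowWitness.natCast n)⟩

/-- With μ♯ as in the setup: ((2u−1)/(2u+1))·μ♯(−u) ⇒ μ♯(u) iff a_{2k+1} ≤ −1. -/
theorem darrow_twist_sharp_iff_special_le_neg_one (k : ℕ) (a : ℕ → ℂ) (γ μs : PS)
    (hγ : EvenOne γ) (hμs : One1 μs)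
    (hcond : SharpCond k a)
    (hpa : ∀ i < k, IsNonnegInt (a (2*i) + a (2*i+1)))
    (hdef : γ * linF (1/2) * μs =
      (∏ i ∈ Finset.range (2*k), linF (-(a i))) * linF (1 + a (2*k))) :
    DArrow (linF (-(1/2)) * (linF (1/2))⁻¹ * negU μs) μs ↔
      IsNonnegInt (-1 - a (2*k)) :=
  darrow_twist_sharp_iff_special_le_neg_one_general k a γ μs hγ hcond hpa hdef
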